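/- arXiv:1004.2439 — 2 statements merged into one kernel-verified Lean document; each statement's English description precedes it below -/
import Mathlib

section
/- For real μ > -1, the integral of cos(2x)^μ / cos(x)^(2μ+2) over x from 0 to π/4 equals 2^(2μ) * B(μ+1, μ+1). -/
/-!
Substituting `t = tan x` turns the integrand into `(1 - t²)^μ dt` on `[0, 1]`, since
`cos 2x = cos² x (1 - tan² x)` and `dt = dx / cos² x`. Substituting `u = t²` then gives
`B(1/2, μ + 1) / 2`, and Legendre's duplication formula rewrites `B(1/2, b)` as `2^(2b-1) B(b, b)`.
-/

open Real Set intervalIntegral ProbabilityTheory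

theorem integral_rpow_mul_one_sub_rpow_eq_beta {a b : ℝ} (ha : 0 < a) (hb : 0 < b) :
    ∫ x in (0 : ℝ)..1, x ^ (a - 1) * (1 - x) ^ (b - 1) = beta a b := by
  have hcomplex : ((∫ x in (0 : ℝ)..1, x ^ (a - 1) * (1 - x) ^ (b - 1) : ℝ) : ℂ) =
      Complex.betaIntegral a b := by
    rw [← integral_ofReal]
    refine integral_congr fun x hx => ?_
    rw [uIcc_of_le zero_le_one] at hx
    simp only [Complex.ofReal_mul, Complex.ofReal_cpow hx.1,
      Complex.ofReal_cpow (sub_nonneg.2 hx.2)]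
    push_cast
    rfl
  rw [beta_eq_betaIntegralReal a b ha hb, ← hcomplex, Complex.ofReal_re]

theorem integral_rpow_mul_one_sub_sq_rpow (a b : ℝ) :
    ∫ t in (0 : ℝ)..1, t ^ (2 * a - 1) * (1 - t ^ 2) ^ (b - 1) =
      1 / 2 * ∫ u in (0 : ℝ)..1, u ^ (a - 1) * (1 - u) ^ (b - 1) := by
  have hsubst : ∫ t in (0 : ℝ)..1, (t ^ 2) ^ (a - 1) * (1 - t ^ 2) ^ (b - 1) * (2 * t) =
      ∫ u in (0 : ℝ)..1, u ^ (a - 1) * (1 - u) ^ (b - 1) := by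
    convert integral_comp_mul_deriv_of_deriv_nonneg (a := 0) (b := 1)
      (f := fun t => t ^ 2) (f' := fun t => 2 * t) (g := fun u => u ^ (a - 1) * (1 - u) ^ (b - 1))
      (by fun_prop) (fun t _ => by simpa using hasDerivAt_pow 2 t)
      (fun t ht => by simp at ht; linarith [ht.1]) using 2 <;> norm_num
  rw [← hsubst, ← integral_const_mul]
  refine integral_congr_Ioo_of_le zero_le_one fun t ht => ?_
  have ht0 : 0 < t := ht.1
  have hpow : (t ^ 2) ^ (a - 1) * (2 * t) = 2 * t ^ (2 * a - 1) := by
    rw [← rpow_natCast, ← rpow_mul ht0.le,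
      show 2 * a - 1 = (2 : ℕ) * (a - 1) + 1 by push_cast; ring, rpow_add_one ht0.ne']
    ring
  linear_combination (-1 / 2) * (1 - t ^ 2) ^ (b - 1) * hpow

theorem one_sub_tan_sq_eq_cos_two_mul_div {x : ℝ} (hx : cos x ≠ 0) :
    1 - tan x ^ 2 = cos (2 * x) / cos x ^ 2 := by
  rw [tan_eq_sin_div_cos, cos_two_mul']
  field_simp

theorem integral_cos_two_mul_rpow_mul_cos_rpow (μ : ℝ) :
    ∫ x in (0 : ℝ)..(π / 4), cos (2 * x) ^ μ * cos x ^ (-(2 * μ + 2)) =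
      ∫ t in (0 : ℝ)..1, (1 - t ^ 2) ^ μ := by
  have hcos : ∀ x ∈ uIcc 0 (π / 4), 0 < cos x := fun x hx => by
    rw [uIcc_of_le (by positivity)] at hx
    exact cos_pos_of_mem_Ioo ⟨by linarith [hx.1, pi_pos], by linarith [hx.2, pi_pos]⟩
  have hsubst := integral_comp_mul_deriv_of_deriv_nonneg (a := 0) (b := π / 4)
    (f := tan) (f' := fun x => 1 / cos x ^ 2) (g := fun t => (1 - t ^ 2) ^ μ)
    (continuousOn_tan.mono fun x hx => (hcos x hx).ne')
    (fun x hx => hasDerivAt_tan (hcos x (Ioo_subset_Icc_self hx)).ne')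
    (fun x _ => by positivity)
  rw [tan_zero, tan_pi_div_four] at hsubst
  rw [← hsubst]
  refine integral_congr fun x hx => ?_
  have hcx := hcos x hx
  rw [uIcc_of_le (by positivity)] at hx
  have hcos2 : 0 ≤ cos (2 * x) :=
    cos_nonneg_of_mem_Icc ⟨by linarith [hx.1, pi_pos], by linarith [hx.2]⟩
  have hexp : cos x ^ (2 * μ + 2) = (cos x ^ 2) ^ μ * cos x ^ 2 := by
    rw [rpow_add hcx, rpow_mul hcx.le, rpow_two]
  simp only [Function.comp_apply]
  rw [one_sub_tan_sq_eq_cos_two_mul_div hcx.ne', div_rpow hcos2 (by positivity),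
    rpow_neg hcx.le, hexp]
  field_simp

theorem beta_one_half_left {b : ℝ} (hb : 0 < b) :
    beta (1 / 2) b = 2 ^ (2 * b - 1) * beta b b := by
  have hduplication := Gamma_mul_Gamma_add_half b
  have h2b : Gamma (2 * b) ≠ 0 := (Gamma_pos_of_pos (by linarith)).ne'
  have hhalf : Gamma (b + 1 / 2) ≠ 0 := (Gamma_pos_of_pos (by linarith)).ne'
  have hpow : (2 : ℝ) ^ (2 * b - 1) * 2 ^ (1 - 2 * b) = 1 := by
    rw [← rpow_add two_pos]
    norm_num
  rw [beta, beta, Gamma_one_half_eq, add_comm (1 / 2), ← two_mul, mul_div_assoc',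
    div_eq_div_iff hhalf h2b]
  linear_combination
    (-2 ^ (2 * b - 1) * Gamma b) * hduplication - √π * Gamma b * Gamma (2 * b) * hpow

theorem stmt15 (μ : ℝ) (hμ : -1 < μ) :
    ∫ x in (0:ℝ)..(π/4), (Real.cos (2 * x)) ^ μ * (Real.cos x) ^ (-(2 * μ + 2)) =
      2 ^ (2 * μ) * (Real.Gamma (μ+1) * Real.Gamma (μ+1) / Real.Gamma ((μ+1) + (μ+1))) := by
  have hb : 0 < μ + 1 := by linarith
  have hpow : (1 / 2 : ℝ) * 2 ^ (2 * (μ + 1) - 1) = 2 ^ (2 * μ) := by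
    rw [show 2 * (μ + 1) - 1 = 2 * μ + 1 by ring, rpow_add_one two_ne_zero]
    ring
  calc ∫ x in (0 : ℝ)..(π / 4), cos (2 * x) ^ μ * cos x ^ (-(2 * μ + 2))
      = ∫ t in (0 : ℝ)..1, t ^ (2 * (1 / 2 : ℝ) - 1) * (1 - t ^ 2) ^ (μ + 1 - 1) := by
        rw [integral_cos_two_mul_rpow_mul_cos_rpow]
        norm_num
    _ = 1 / 2 * beta (1 / 2) (μ + 1) := by
        rw [integral_rpow_mul_one_sub_sq_rpow,
          integral_rpow_mul_one_sub_rpow_eq_beta one_half_pos hb]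
    _ = 2 ^ (2 * μ) * beta (μ + 1) (μ + 1) := by
        rw [beta_one_half_left hb, ← mul_assoc, hpow]
end

section
/- For natural numbers n, m ≥ 0, the integral of sin(x)^(2n) * cos(2x)^(m - 1/2) / cos(x)^(2n+2m+1) over x from 0 to π/4 equals (π / 2^(2n+2m+1)) * binomial(2n, n) * binomial(2m, m) / binomial(n+m, n). -/
/-!
Substituting `u = tan² x` turns the integral into half of the Beta integral
`B(n + 1/2, m + 1/2) = Γ(n + 1/2) Γ(m + 1/2) / Γ(n + m + 1)`, and
`Γ(k + 1/2) = √π · C(2k, k) · k! / 4^k` at half-integers.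
-/

open Real

theorem integral_rpow_mul_one_sub_rpow_eq_Gamma_mul_div {a b : ℝ} (ha : 0 < a)
    (hb : 0 < b) :
    ∫ x in (0:ℝ)..1, x ^ (a - 1) * (1 - x) ^ (b - 1) = Gamma a * Gamma b / Gamma (a + b) := by
  apply Complex.ofReal_injective
  push_cast [← intervalIntegral.integral_ofReal, ← Complex.Gamma_ofReal]
  rw [← Complex.betaIntegral_eq_Gamma_mul_div _ _ (by simpa) (by simpa)]
  refine intervalIntegral.integral_congr fun x hx => ?_
  rw [Set.uIcc_of_le zero_le_one] at hx
  rw [Complex.ofReal_cpow hx.1, Complex.ofReal_cpow (sub_nonneg.2 hx.2)]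
  push_cast
  rfl

theorem Real.Gamma_nat_add_half_eq_centralBinom (k : ℕ) :
    Gamma (k + 1 / 2) = √π * k.centralBinom * k.factorial / 4 ^ k := by
  induction k with
  | zero => simpa using Gamma_one_half_eq
  | succ k ih =>
    have hrec : ((k + 1 : ℕ) : ℝ) * (k + 1).centralBinom =
        2 * (2 * k + 1) * k.centralBinom := by
      exact_mod_cast Nat.succ_mul_centralBinom_succ k
    rw [Nat.cast_succ, add_right_comm, Gamma_add_one (by positivity), ih, Nat.factorial_succ,
      pow_succ]
    push_cast at hrec ⊢
    linear_combination (-(√π * k.factorial) / (4 ^ k * 4)) * hrec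

theorem hasDerivAt_tan_sq {x : ℝ} (hx : cos x ≠ 0) :
    HasDerivAt (fun y => tan y ^ 2) (2 * tan x / cos x ^ 2) x :=
  ((hasDerivAt_tan hx).fun_pow 2).congr_deriv (by ring)

theorem integral_comp_tan_sq_mul_deriv (g : ℝ → ℝ) :
    ∫ x in (0:ℝ)..(π / 4), g (tan x ^ 2) * (2 * tan x / cos x ^ 2) =
      ∫ u in (0:ℝ)..1, g u := by
  have hπ : (0:ℝ) ≤ π / 4 := by positivity
  have hcos : ∀ x ∈ Set.uIcc 0 (π / 4), cos x ≠ 0 := by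
    intro x hx
    rw [Set.uIcc_of_le hπ] at hx
    exact (cos_pos_of_mem_Ioo ⟨by linarith [hx.1, pi_pos], by linarith [hx.2, pi_pos]⟩).ne'
  have hsubst := intervalIntegral.integral_comp_mul_deriv_of_deriv_nonneg (g := g)
    (fun x hx => (hasDerivAt_tan_sq (hcos x hx)).continuousAt.continuousWithinAt)
    (fun x hx => hasDerivAt_tan_sq (hcos x (Set.Ioo_subset_Icc_self hx))) (fun x hx => ?_)
  · simpa [tan_pi_div_four] using hsubst
  · rw [min_eq_left hπ, max_eq_right hπ] at hx
    have : 0 < tan x := tan_pos_of_pos_of_lt_pi_div_two hx.1 (by linarith [hx.2, pi_pos])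
    positivity

theorem sin_pow_mul_cos_two_mul_rpow_mul_cos_rpow_eq {x : ℝ} (hx₀ : 0 < x) (hx₁ : x < π / 4)
    (n : ℕ) (q : ℝ) :
    sin x ^ (2 * n) * cos (2 * x) ^ (q - 1 / 2) * cos x ^ (-(2 * (n : ℝ) + 2 * q + 1)) =
      2⁻¹ * ((tan x ^ 2) ^ ((n + 1 / 2 : ℝ) - 1) * (1 - tan x ^ 2) ^ ((q + 1 / 2) - 1)) *
        (2 * tan x / cos x ^ 2) := by
  have hs : 0 < sin x := sin_pos_of_pos_of_lt_pi hx₀ (by linarith [pi_pos])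
  have hc : 0 < cos x := cos_pos_of_mem_Ioo ⟨by linarith [pi_pos], by linarith [pi_pos]⟩
  have hc₂ : 0 < cos x ^ 2 - sin x ^ 2 := by
    rw [← cos_two_mul']
    exact cos_pos_of_mem_Ioo ⟨by linarith [pi_pos], by linarith [pi_pos]⟩
  have h1t : 1 - tan x ^ 2 = (cos x ^ 2 - sin x ^ 2) / cos x ^ 2 := by
    rw [tan_eq_sin_div_cos]; field_simp
  rw [cos_two_mul', h1t, tan_eq_sin_div_cos]
  refine log_injOn_pos (Set.mem_Ioi.2 (by positivity)) (Set.mem_Ioi.2 (by positivity)) ?_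
  simp (disch := positivity) only [log_mul, log_div, log_rpow, log_pow, log_inv]
  push_cast
  ring

theorem stmt18 (n m : ℕ) :
    ∫ x in (0:ℝ)..(π/4), (Real.sin x) ^ (2 * n) * (Real.cos (2 * x)) ^ ((m : ℝ) - 1/2) *
        (Real.cos x) ^ (-(2 * (n : ℝ) + 2 * (m : ℝ) + 1)) =
      π / 2 ^ (2 * n + 2 * m + 1) * (Nat.choose (2 * n) n : ℝ) * (Nat.choose (2 * m) m : ℝ) /
        (Nat.choose (n + m) n : ℝ) := by
  have hbeta : ∫ x in (0:ℝ)..(π/4), sin x ^ (2 * n) * cos (2 * x) ^ ((m : ℝ) - 1/2) *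
      cos x ^ (-(2 * (n : ℝ) + 2 * (m : ℝ) + 1)) =
        2⁻¹ * ∫ u in (0:ℝ)..1,
          u ^ ((n + 1 / 2 : ℝ) - 1) * (1 - u) ^ ((m + 1 / 2 : ℝ) - 1) := by
    rw [← intervalIntegral.integral_const_mul, ← integral_comp_tan_sq_mul_deriv]
    exact intervalIntegral.integral_congr_Ioo_of_le (by positivity) fun x hx =>
      sin_pow_mul_cos_two_mul_rpow_mul_cos_rpow_eq hx.1 hx.2 n m
  have hsum : (n + 1 / 2 : ℝ) + (m + 1 / 2) = ((m + n : ℕ) : ℝ) + 1 := by push_cast; ring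
  have hfact : ((m + n).choose n * m.factorial * n.factorial : ℝ) = (m + n).factorial := by
    exact_mod_cast Nat.add_choose_mul_factorial_mul_factorial m n
  rw [hbeta, integral_rpow_mul_one_sub_rpow_eq_Gamma_mul_div (by positivity) (by positivity),
    hsum, Gamma_nat_eq_factorial, Gamma_nat_add_half_eq_centralBinom,
    Gamma_nat_add_half_eq_centralBinom, ← hfact, add_comm m n,
    ← Nat.centralBinom_eq_two_mul_choose, ← Nat.centralBinom_eq_two_mul_choose]
  have h4 : (2:ℝ) ^ (2 * n + 2 * m + 1) = 4 ^ n * 4 ^ m * 2 := by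
    rw [pow_succ, pow_add, pow_mul, pow_mul]; norm_num
  rw [h4]
  field_simp
  rw [sq_sqrt pi_pos.le]
  ring
end
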